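/- If the mediator splits as M = (M⁽¹⁾, M⁽²⁾) with M⁽²⁾ ⊥ Y | (Z, L, X), then for all values, E[Y | Z=z, L=l, M=m, X=x] = E[Y | Z=z, L=l, M⁽¹⁾=m⁽¹⁾, X=x], where m⁽¹⁾ is the M⁽¹⁾-component of m; consequently Σ_{x,l,m} E[Y | Z=1, L=l, M=m, X=x] P(L=l | Z=1, X=x) (P(M=m | Z=1, X=x) − P(M=m | Z=0, X=x)) P(X=x) = Σ_{x,l,m⁽¹⁾} E[Y | Z=1, L=l, M⁽¹⁾=m⁽¹⁾, X=x] P(L=l | Z=1, X=x) (P(M⁽¹⁾=m⁽¹⁾ | Z=1, X=x) − P(M⁽¹⁾=m⁽¹⁾ | Z=0, X=x)) P(X=x). -/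
import Mathlib


open Finset

noncomputable def pr {Ω : Type*} [Fintype Ω] (P : Ω → ℝ) (A : Set Ω) : ℝ :=
  ∑ ω : Ω, A.indicator P ω

noncomputable def cpr {Ω : Type*} [Fintype Ω] (P : Ω → ℝ) (A B : Set Ω) : ℝ :=
  pr P (A ∩ B) / pr P B

noncomputable def cexp {Ω : Type*} [Fintype Ω] (P : Ω → ℝ) (f : Ω → ℝ) (B : Set Ω) : ℝ :=
  (∑ ω : Ω, B.indicator (fun ω => P ω * f ω) ω) / pr P B

noncomputable def ex {Ω : Type*} [Fintype Ω] (P : Ω → ℝ) (f : Ω → ℝ) : ℝ :=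
  ∑ ω : Ω, P ω * f ω

def CondIndepFun {Ω : Type*} [Fintype Ω] (P : Ω → ℝ) {α β γ : Type*}
    (A : Ω → α) (B : Ω → β) (C : Ω → γ) : Prop :=
  ∀ a b c,
    pr P {ω | A ω = a ∧ B ω = b ∧ C ω = c} * pr P {ω | C ω = c} =
      pr P {ω | A ω = a ∧ C ω = c} * pr P {ω | B ω = b ∧ C ω = c}

section Aux
variable {Ω : Type*} [Fintype Ω]

lemma pr_mono (P : Ω → ℝ) (hP : ∀ ω, 0 ≤ P ω) {A B : Set Ω} (h : A ⊆ B) :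
    pr P A ≤ pr P B :=
  Finset.sum_le_sum fun ω _ => Set.indicator_le_indicator_of_subset h (fun _ => hP _) ω

lemma cexp_num (P : Ω → ℝ) (Y : Ω → ℝ) (B : Set Ω) :
    (∑ ω : Ω, B.indicator (fun ω => P ω * Y ω) ω)
      = ∑ a ∈ univ.image Y, a * pr P {ω | Y ω = a ∧ ω ∈ B} := by
  classical
  have h1 : ∀ a, a * pr P {ω | Y ω = a ∧ ω ∈ B}
      = ∑ ω : Ω, if Y ω = a ∧ ω ∈ B then a * P ω else 0 := by
    intro a
    rw [pr, Finset.mul_sum]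
    refine Finset.sum_congr rfl fun ω _ => ?_
    by_cases h : Y ω = a ∧ ω ∈ B <;>
      simp [Set.indicator, Set.mem_setOf_eq, h]
  simp only [h1]
  rw [Finset.sum_comm]
  refine Finset.sum_congr rfl fun ω _ => ?_
  rw [Finset.sum_eq_single (Y ω)]
  · by_cases h : ω ∈ B <;> simp [Set.indicator, h, mul_comm]
  · intro b _ hb
    exact if_neg fun h => (Ne.symm hb) h.1
  · intro h; exact absurd (mem_image_of_mem Y (mem_univ ω)) h

lemma cexp_eq (P : Ω → ℝ) (Y : Ω → ℝ) (B : Set Ω) :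
    cexp P Y B = (∑ a ∈ univ.image Y, a * pr P {ω | Y ω = a ∧ ω ∈ B}) / pr P B := by
  rw [cexp, cexp_num]

end Aux


/-- Reduction of the IIE identification formula to the relevant mediator components
(Corollary 3.4): if Y ⊥ M⁽²⁾ | (Z, L, X, M⁽¹⁾), then conditioning on the full mediator
is the same as conditioning on M⁽¹⁾, and the triple sum collapses accordingly. -/
theorem mediator_subset_reduction {Ω 𝓜₁ 𝓜₂ 𝓛 𝓧 : Type*}
    [Fintype Ω] [Fintype 𝓜₁] [Fintype 𝓜₂] [Fintype 𝓛] [Fintype 𝓧]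
    (P : Ω → ℝ) (hP : ∀ ω, 0 ≤ P ω) (hP1 : ∑ ω : Ω, P ω = 1)
    (Z : Ω → Bool) (L : Ω → 𝓛) (M₁ : Ω → 𝓜₁) (M₂ : Ω → 𝓜₂) (X : Ω → 𝓧) (Y : Ω → ℝ)
    (hpos : ∀ z l m₁ m₂ x,
      0 < pr P {ω | Z ω = z ∧ L ω = l ∧ M₁ ω = m₁ ∧ M₂ ω = m₂ ∧ X ω = x})
    (hsplit : CondIndepFun P Y M₂ (fun ω => (Z ω, L ω, X ω, M₁ ω))) :
    (∀ (z : Bool) (l : 𝓛) (m₁ : 𝓜₁) (m₂ : 𝓜₂) (x : 𝓧),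
      cexp P Y {ω | Z ω = z ∧ L ω = l ∧ M₁ ω = m₁ ∧ M₂ ω = m₂ ∧ X ω = x} =
        cexp P Y {ω | Z ω = z ∧ L ω = l ∧ M₁ ω = m₁ ∧ X ω = x}) ∧
    (∑ x : 𝓧, ∑ l : 𝓛, ∑ m : 𝓜₁ × 𝓜₂,
        cexp P Y {ω | Z ω = true ∧ L ω = l ∧ (M₁ ω, M₂ ω) = m ∧ X ω = x} *
          cpr P {ω | L ω = l} {ω | Z ω = true ∧ X ω = x} *
          (cpr P {ω | (M₁ ω, M₂ ω) = m} {ω | Z ω = true ∧ X ω = x} -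
            cpr P {ω | (M₁ ω, M₂ ω) = m} {ω | Z ω = false ∧ X ω = x}) *
          pr P {ω | X ω = x}) =
      ∑ x : 𝓧, ∑ l : 𝓛, ∑ m₁ : 𝓜₁,
        cexp P Y {ω | Z ω = true ∧ L ω = l ∧ M₁ ω = m₁ ∧ X ω = x} *
          cpr P {ω | L ω = l} {ω | Z ω = true ∧ X ω = x} *
          (cpr P {ω | M₁ ω = m₁} {ω | Z ω = true ∧ X ω = x} -
            cpr P {ω | M₁ ω = m₁} {ω | Z ω = false ∧ X ω = x}) *
          pr P {ω | X ω = x} := by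
  classical
  have key : ∀ (z : Bool) (l : 𝓛) (m₁ : 𝓜₁) (m₂ : 𝓜₂) (x : 𝓧),
      cexp P Y {ω | Z ω = z ∧ L ω = l ∧ M₁ ω = m₁ ∧ M₂ ω = m₂ ∧ X ω = x} =
        cexp P Y {ω | Z ω = z ∧ L ω = l ∧ M₁ ω = m₁ ∧ X ω = x} := by
    intro z l m₁ m₂ x
    set c : Bool × 𝓛 × 𝓧 × 𝓜₁ := (z, l, x, m₁) with hc
    have hpC : pr P {ω | (Z ω, L ω, X ω, M₁ ω) = c}
        = pr P {ω | Z ω = z ∧ L ω = l ∧ M₁ ω = m₁ ∧ X ω = x} := by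
      congr 1; ext ω; simp [hc, Prod.ext_iff]; tauto
    have hpB : pr P {ω | M₂ ω = m₂ ∧ (Z ω, L ω, X ω, M₁ ω) = c}
        = pr P {ω | Z ω = z ∧ L ω = l ∧ M₁ ω = m₁ ∧ M₂ ω = m₂ ∧ X ω = x} := by
      congr 1; ext ω; simp [hc, Prod.ext_iff]; tauto
    have hBpos : 0 < pr P {ω | M₂ ω = m₂ ∧ (Z ω, L ω, X ω, M₁ ω) = c} := by
      rw [hpB]; exact hpos z l m₁ m₂ x
    have hCpos : 0 < pr P {ω | (Z ω, L ω, X ω, M₁ ω) = c} := by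
      refine lt_of_lt_of_le hBpos (pr_mono P hP ?_)
      intro ω hω; exact hω.2
    rw [cexp_eq, cexp_eq, hpC.symm, hpB.symm]
    have hnum : ∀ a : ℝ,
        pr P {ω | Y ω = a ∧ ω ∈ {ω | Z ω = z ∧ L ω = l ∧ M₁ ω = m₁ ∧ M₂ ω = m₂ ∧ X ω = x}}
          = pr P {ω | Y ω = a ∧ (Z ω, L ω, X ω, M₁ ω) = c}
              * pr P {ω | M₂ ω = m₂ ∧ (Z ω, L ω, X ω, M₁ ω) = c}
              / pr P {ω | (Z ω, L ω, X ω, M₁ ω) = c} := by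
      intro a
      have h0 : pr P {ω | Y ω = a ∧ ω ∈ {ω | Z ω = z ∧ L ω = l ∧ M₁ ω = m₁ ∧ M₂ ω = m₂ ∧ X ω = x}}
          = pr P {ω | Y ω = a ∧ M₂ ω = m₂ ∧ (Z ω, L ω, X ω, M₁ ω) = c} := by
        congr 1; ext ω; simp [hc, Prod.ext_iff]; tauto
      rw [h0, eq_div_iff (ne_of_gt hCpos)]
      exact hsplit a m₂ c
    have hnum2 : ∀ a : ℝ,
        pr P {ω | Y ω = a ∧ ω ∈ {ω | Z ω = z ∧ L ω = l ∧ M₁ ω = m₁ ∧ X ω = x}}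
          = pr P {ω | Y ω = a ∧ (Z ω, L ω, X ω, M₁ ω) = c} := by
      intro a; congr 1; ext ω; simp [hc, Prod.ext_iff]; tauto
    simp only [hnum, hnum2]
    rw [div_eq_div_iff (ne_of_gt hBpos) (ne_of_gt hCpos), Finset.sum_mul, Finset.sum_mul]
    refine Finset.sum_congr rfl fun a _ => ?_
    field_simp
  refine ⟨key, ?_⟩
  refine Finset.sum_congr rfl fun x _ => Finset.sum_congr rfl fun l _ => ?_
  rw [Fintype.sum_prod_type]
  refine Finset.sum_congr rfl fun m₁ _ => ?_
  have hce : ∀ m₂ : 𝓜₂,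
      cexp P Y {ω | Z ω = true ∧ L ω = l ∧ (M₁ ω, M₂ ω) = (m₁, m₂) ∧ X ω = x}
        = cexp P Y {ω | Z ω = true ∧ L ω = l ∧ M₁ ω = m₁ ∧ X ω = x} := by
    intro m₂
    have h0 : {ω | Z ω = true ∧ L ω = l ∧ (M₁ ω, M₂ ω) = (m₁, m₂) ∧ X ω = x}
        = {ω | Z ω = true ∧ L ω = l ∧ M₁ ω = m₁ ∧ M₂ ω = m₂ ∧ X ω = x} := by
      ext ω; simp [Prod.ext_iff]; tauto
    rw [h0]; exact key true l m₁ m₂ x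
  have hprsum : ∀ B : Set Ω,
      (∑ m₂ : 𝓜₂, pr P ({ω | (M₁ ω, M₂ ω) = (m₁, m₂)} ∩ B))
        = pr P ({ω | M₁ ω = m₁} ∩ B) := by
    intro B
    unfold pr
    rw [Finset.sum_comm]
    refine Finset.sum_congr rfl fun ω _ => ?_
    rw [Finset.sum_eq_single (M₂ ω)]
    · simp [Set.indicator_apply, Set.mem_setOf_eq, Prod.ext_iff]
    · intro b _ hb
      have hnm : ω ∉ ({ω | (M₁ ω, M₂ ω) = (m₁, b)} : Set Ω) ∩ B := fun h =>
        hb (congrArg Prod.snd h.1).symm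
      exact Set.indicator_of_notMem hnm P
    · intro h; exact absurd (mem_univ (M₂ ω)) h
  have hcprsum : ∀ B : Set Ω,
      (∑ m₂ : 𝓜₂, cpr P {ω | (M₁ ω, M₂ ω) = (m₁, m₂)} B)
        = cpr P {ω | M₁ ω = m₁} B := by
    intro B
    unfold cpr
    rw [← Finset.sum_div, hprsum]
  calc (∑ m₂ : 𝓜₂,
        cexp P Y {ω | Z ω = true ∧ L ω = l ∧ (M₁ ω, M₂ ω) = (m₁, m₂) ∧ X ω = x} *
          cpr P {ω | L ω = l} {ω | Z ω = true ∧ X ω = x} *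
          (cpr P {ω | (M₁ ω, M₂ ω) = (m₁, m₂)} {ω | Z ω = true ∧ X ω = x} -
            cpr P {ω | (M₁ ω, M₂ ω) = (m₁, m₂)} {ω | Z ω = false ∧ X ω = x}) *
          pr P {ω | X ω = x})
      = cexp P Y {ω | Z ω = true ∧ L ω = l ∧ M₁ ω = m₁ ∧ X ω = x} *
          cpr P {ω | L ω = l} {ω | Z ω = true ∧ X ω = x} *
          ((∑ m₂ : 𝓜₂, cpr P {ω | (M₁ ω, M₂ ω) = (m₁, m₂)} {ω | Z ω = true ∧ X ω = x}) -
            (∑ m₂ : 𝓜₂, cpr P {ω | (M₁ ω, M₂ ω) = (m₁, m₂)} {ω | Z ω = false ∧ X ω = x})) *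
          pr P {ω | X ω = x} := by
        rw [← Finset.sum_sub_distrib, Finset.mul_sum, Finset.sum_mul]
        refine Finset.sum_congr rfl fun m₂ _ => ?_
        rw [hce m₂]
    _ = cexp P Y {ω | Z ω = true ∧ L ω = l ∧ M₁ ω = m₁ ∧ X ω = x} *
          cpr P {ω | L ω = l} {ω | Z ω = true ∧ X ω = x} *
          (cpr P {ω | M₁ ω = m₁} {ω | Z ω = true ∧ X ω = x} -
            cpr P {ω | M₁ ω = m₁} {ω | Z ω = false ∧ X ω = x}) *
          pr P {ω | X ω = x} := by
        rw [hcprsum, hcprsum]
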